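/- Let A be a unital associative ℂ-algebra with invertible element a and elements b_i, b_j satisfying a*b_i = p_i•(b_i*a), a*b_j = p_j•(b_j*a), and b_i*b_j = ε•(p_j^{z_i}*p_i^{-z_j})•(b_j*b_i), where ε = ±1, p_i, p_j ∈ ℂˣ and z_i, z_j ∈ ℤ. Define x_i := a⁻¹*b_i and x_j := a⁻¹*b_j. Then x_i*x_j = ε•(p_i^{1-z_j}*p_j^{z_i-1})•(x_j*x_i). -/

import Mathlib

/-!
Conjugating by `a` rescales each `b` by its weight, so `b * a⁻¹ = p • (a⁻¹ * b)`. Moving the inner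
`a⁻¹` of `(a⁻¹ * b) * (a⁻¹ * c)` to the left therefore gives `p_b • (a⁻¹ * a⁻¹ * (b * c))`; comparing
this for `x_i * x_j` and `x_j * x_i` through the relation between `b_i * b_j` and `b_j * b_i`
changes the commutation factor by `p_i * p_j⁻¹`.
-/

section SkewCommutation

variable {R A : Type*} [CommSemiring R] [Semiring A] [Algebra R A] {p : R} {a a' b c : A}

theorem mul_inverse_eq_smul_inverse_mul (h : a * b = p • (b * a)) (h₁ : a * a' = 1)
    (h₂ : a' * a = 1) : b * a' = p • (a' * b) :=
  calc b * a' = a' * (a * b) * a' := by rw [← mul_assoc, h₂, one_mul]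
    _ = p • (a' * b * (a * a')) := by
      rw [h, mul_smul_comm, smul_mul_assoc, mul_assoc, mul_assoc, mul_assoc]
    _ = p • (a' * b) := by rw [h₁, mul_one]

theorem inverse_mul_mul_inverse_mul (h : b * a' = p • (a' * b)) :
    a' * b * (a' * c) = p • (a' * a' * (b * c)) := by
  rw [mul_assoc, ← mul_assoc b, h, smul_mul_assoc, mul_smul_comm]
  simp only [mul_assoc]

end SkewCommutation

theorem stmt_4_general (A : Type*) [Ring A] [Algebra ℂ A] (a ainv bi bj : A)
    (pi pj : ℂ) (hpi : pi ≠ 0) (hpj : pj ≠ 0) (zi zj : ℤ)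
    (ε : ℂ)
    (ha : a * ainv = 1) (ha' : ainv * a = 1)
    (hbi : a * bi = pi • (bi * a)) (hbj : a * bj = pj • (bj * a))
    (hbij : bi * bj = (ε * pj ^ zi * pi ^ (-zj)) • (bj * bi)) :
    (ainv * bi) * (ainv * bj)
      = (ε * pi ^ ((1 : ℤ) - zj) * pj ^ (zi - 1)) • ((ainv * bj) * (ainv * bi)) := by
  have hi := mul_inverse_eq_smul_inverse_mul hbi ha ha'
  have hj := mul_inverse_eq_smul_inverse_mul hbj ha ha'
  calc ainv * bi * (ainv * bj) = pi • (ainv * ainv * (bi * bj)) := inverse_mul_mul_inverse_mul hi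
    _ = (pi * (ε * pj ^ zi * pi ^ (-zj))) • (ainv * ainv * (bj * bi)) := by
      rw [hbij, mul_smul_comm, smul_smul]
    _ = (pi * (ε * pj ^ zi * pi ^ (-zj)) * pj⁻¹) • (ainv * bj * (ainv * bi)) := by
      rw [inverse_mul_mul_inverse_mul hj, smul_smul, mul_assoc _ pj⁻¹, inv_mul_cancel₀ hpj,
        mul_one]
    _ = (ε * pi ^ ((1 : ℤ) - zj) * pj ^ (zi - 1)) • (ainv * bj * (ainv * bi)) := by
      rw [sub_eq_add_neg, zpow_add₀ hpi, zpow_one, zpow_sub_one₀ hpj]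
      congr 1
      ring

theorem stmt_4 (A : Type*) [Ring A] [Algebra ℂ A] (a ainv bi bj : A)
    (pi pj : ℂ) (hpi : pi ≠ 0) (hpj : pj ≠ 0) (zi zj : ℤ)
    (ε : ℂ) (hε : ε = 1 ∨ ε = -1)
    (ha : a * ainv = 1) (ha' : ainv * a = 1)
    (hbi : a * bi = pi • (bi * a)) (hbj : a * bj = pj • (bj * a))
    (hbij : bi * bj = (ε * pj ^ zi * pi ^ (-zj)) • (bj * bi)) :
    (ainv * bi) * (ainv * bj)
      = (ε * pi ^ ((1 : ℤ) - zj) * pj ^ (zi - 1)) • ((ainv * bj) * (ainv * bi)) :=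
  stmt_4_general A a ainv bi bj pi pj hpi hpj zi zj ε ha ha' hbi hbj hbij
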